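/- Under the subjective censored-history distribution H(Ψ(μ₁, μ₂; γ); c), the conditional mean of the 'recentered' second draw satisfies E[h₂ + γh₁ | h₂ ≠ ∅] = μ₂ + γμ₁ for every cutoff c ∈ ℝ; whereas under the true distribution H•(c) (with independent draws), E[h₂ + γh₁ | h₂ ≠ ∅] = μ₂• + γ·E[X₁ | X₁ ≤ c]. Consequently the unique (μ₁, μ₂) matching both the first-draw mean and the recentered second-draw mean of H•(c) is μ₁ = μ₁• and μ₂ = μ₂• − γ(μ₁• − E[X₁ | X₁ ≤ c]). -/

import Mathlib

open MeasureTheory Set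

/-- Gaussian density with mean `a` and variance `s2`. -/
noncomputable def gauss (a s2 x : ℝ) : ℝ :=
  (Real.sqrt (2 * Real.pi * s2))⁻¹ * Real.exp (-(x - a) ^ 2 / (2 * s2))

/-- Mean of a `N(a, s2)` random variable truncated above at `c`, i.e. `E[X | X ≤ c]`. -/
noncomputable def truncMean (a s2 c : ℝ) : ℝ :=
  (∫ x in Iic c, x * gauss a s2 x) / (∫ x in Iic c, gauss a s2 x)

/-- `E[h₂ + γh₁ | h₂ ≠ ∅]` under the subjective censored-history distribution
`H(Ψ(μ₁, μ₂; γ); c)`. -/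
noncomputable def recMeanSub (γ s2 c μ1 μ2 : ℝ) : ℝ :=
  (∫ x1 in Iic c, ∫ x2 : ℝ,
      (x2 + γ * x1) * (gauss μ1 s2 x1 * gauss (μ2 - γ * (x1 - μ1)) s2 x2)) /
    ∫ x1 in Iic c, gauss μ1 s2 x1

/-- `E[h₂ + γh₁ | h₂ ≠ ∅]` under the true censored-history distribution `H•(c)`,
where the draws are independent with means `μ1b, μ2b`. -/
noncomputable def recMeanTrue (γ s2 c μ1b μ2b : ℝ) : ℝ :=
  (∫ x1 in Iic c, ∫ x2 : ℝ, (x2 + γ * x1) * (gauss μ1b s2 x1 * gauss μ2b s2 x2)) /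
    ∫ x1 in Iic c, gauss μ1b s2 x1

/-- Mean of the first draw (which is never censored) under the subjective model. -/
noncomputable def firstMean (s2 μ1 : ℝ) : ℝ := ∫ x : ℝ, x * gauss μ1 s2 x

/-! Conditionally on `X₁ = x₁`, the subjective model gives `X₂ + γx₁` the mean
`μ₂ − γ(x₁ − μ₁) + γx₁ = μ₂ + γμ₁`, which does not depend on `x₁`; so averaging over the
uncensored event `X₁ ≤ c` leaves it unchanged. Under the true model the same inner integration
leaves `μ₂• + γx₁`, whose average over `X₁ ≤ c` is `μ₂• + γ E[X₁ | X₁ ≤ c]`. The first-draw mean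
pins `μ₁ = μ₁•`, after which the recentered equation is linear in `μ₂`. -/

open ProbabilityTheory
open scoped NNReal

section

variable {s2 : ℝ}

lemma gauss_coe_eq_gaussianPDFReal (a : ℝ) (v : ℝ≥0) : gauss a v = gaussianPDFReal a v := rfl

lemma gauss_pos (a : ℝ) (hs2 : 0 < s2) (x : ℝ) : 0 < gauss a s2 x := by
  lift s2 to ℝ≥0 using hs2.le
  exact gaussianPDFReal_pos _ _ _ (mod_cast hs2.ne')

lemma integrable_gauss (a : ℝ) (hs2 : 0 ≤ s2) : Integrable (gauss a s2) := by
  lift s2 to ℝ≥0 using hs2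
  exact integrable_gaussianPDFReal _ _

lemma integral_gauss (a : ℝ) (hs2 : 0 < s2) : ∫ x, gauss a s2 x = 1 := by
  lift s2 to ℝ≥0 using hs2.le
  exact integral_gaussianPDFReal_eq_one _ (mod_cast hs2.ne')

lemma integrable_mul_gauss (a : ℝ) (hs2 : 0 < s2) :
    Integrable fun x => x * gauss a s2 x := by
  lift s2 to ℝ≥0 using hs2.le
  have := (memLp_id_gaussianReal (μ := a) (v := s2) 1).integrable le_rfl
  rw [gaussianReal_of_var_ne_zero _ (mod_cast hs2.ne'), integrable_withDensity_iff_integrable_smul'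
    (measurable_gaussianPDF _ _) (ae_of_all _ fun _ => gaussianPDF_lt_top)] at this
  refine this.congr (ae_of_all _ fun x => ?_)
  simp [gaussianPDF, gaussianPDFReal_nonneg, gauss_coe_eq_gaussianPDFReal, mul_comm]

lemma integral_mul_gauss (a : ℝ) (hs2 : 0 < s2) : ∫ x, x * gauss a s2 x = a := by
  lift s2 to ℝ≥0 using hs2.le
  have := integral_id_gaussianReal (μ := a) (v := s2)
  rw [integral_gaussianReal_eq_integral_smul (mod_cast hs2.ne')] at this
  simpa [gauss_coe_eq_gaussianPDFReal, mul_comm] using this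

lemma setIntegral_gauss_pos (a : ℝ) (hs2 : 0 < s2) {s : Set ℝ} (hs : volume s ≠ 0) :
    0 < ∫ x in s, gauss a s2 x := by
  rw [setIntegral_pos_iff_support_of_nonneg_ae (ae_of_all _ fun x => (gauss_pos a hs2 x).le)
    (integrable_gauss a hs2.le).integrableOn, Function.support_eq_univ
    fun x => (gauss_pos a hs2 x).ne', univ_inter]
  exact pos_iff_ne_zero.2 hs

lemma integral_add_mul_gauss (a t : ℝ) (hs2 : 0 < s2) :
    ∫ x, (x + t) * gauss a s2 x = a + t := by
  simp_rw [add_mul]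
  rw [integral_add (integrable_mul_gauss a hs2) ((integrable_gauss a hs2.le).const_mul t),
    integral_mul_gauss a hs2, integral_const_mul, integral_gauss a hs2, mul_one]

lemma integral_add_mul_const_mul_gauss (K a t : ℝ) (hs2 : 0 < s2) :
    ∫ x, (x + t) * (K * gauss a s2 x) = K * (a + t) := by
  simp_rw [mul_left_comm _ K]
  rw [integral_const_mul, integral_add_mul_gauss a t hs2]

lemma recMeanSub_eq (γ c μ1 μ2 : ℝ) (hs2 : 0 < s2) :
    recMeanSub γ s2 c μ1 μ2 = μ2 + γ * μ1 := by
  have hrecenter : ∀ x1, μ2 - γ * (x1 - μ1) + γ * x1 = μ2 + γ * μ1 := fun _ => by ring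
  simp only [recMeanSub, integral_add_mul_const_mul_gauss _ _ _ hs2, hrecenter, integral_mul_const]
  exact mul_div_cancel_left₀ _ (setIntegral_gauss_pos μ1 hs2 (by simp)).ne'

lemma recMeanTrue_eq (γ c μ1b μ2b : ℝ) (hs2 : 0 < s2) :
    recMeanTrue γ s2 c μ1b μ2b = μ2b + γ * truncMean μ1b s2 c := by
  have hsplit : ∀ x1, gauss μ1b s2 x1 * (μ2b + γ * x1) =
      μ2b * gauss μ1b s2 x1 + γ * (x1 * gauss μ1b s2 x1) := fun _ => by ring
  simp only [recMeanTrue, truncMean, integral_add_mul_const_mul_gauss _ _ _ hs2, hsplit]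
  rw [integral_add ((integrable_gauss μ1b hs2.le).const_mul μ2b).integrableOn
    ((integrable_mul_gauss μ1b hs2).const_mul γ).integrableOn, integral_const_mul,
    integral_const_mul]
  field_simp [(setIntegral_gauss_pos μ1b hs2 (s := Iic c) (by simp)).ne']

lemma firstMean_eq (μ1 : ℝ) (hs2 : 0 < s2) : firstMean s2 μ1 = μ1 :=
  integral_mul_gauss μ1 hs2

end

theorem recentered_moment_matching_general (μ1b μ2b s2 γ : ℝ) (hs2 : 0 < s2) :
    (∀ c μ1 μ2 : ℝ, recMeanSub γ s2 c μ1 μ2 = μ2 + γ * μ1) ∧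
    (∀ c : ℝ, recMeanTrue γ s2 c μ1b μ2b = μ2b + γ * truncMean μ1b s2 c) ∧
    (∀ c μ1 μ2 : ℝ,
      firstMean s2 μ1 = firstMean s2 μ1b ∧
        recMeanSub γ s2 c μ1 μ2 = recMeanTrue γ s2 c μ1b μ2b →
      μ1 = μ1b ∧ μ2 = μ2b - γ * (μ1b - truncMean μ1b s2 c)) := by
  refine ⟨fun c μ1 μ2 => recMeanSub_eq γ c μ1 μ2 hs2, fun c => recMeanTrue_eq γ c μ1b μ2b hs2, ?_⟩
  rintro c μ1 μ2 ⟨hfirst, hrecentered⟩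
  rw [firstMean_eq μ1 hs2, firstMean_eq μ1b hs2] at hfirst
  subst hfirst
  rw [recMeanSub_eq γ c μ1 μ2 hs2, recMeanTrue_eq γ c μ1 μ2b hs2] at hrecentered
  exact ⟨rfl, by linarith⟩

/-- Under the subjective model, `E[h₂ + γh₁ | h₂ ≠ ∅] = μ₂ + γμ₁` for every cutoff `c`;
under the true model it equals `μ₂• + γ·E[X₁ | X₁ ≤ c]`. Consequently the unique
`(μ₁, μ₂)` matching both the first-draw mean and the recentered second-draw mean of the
true distribution is `μ₁ = μ₁•`, `μ₂ = μ₂• − γ(μ₁• − E[X₁ | X₁ ≤ c])`. -/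
theorem recentered_moment_matching (μ1b μ2b s2 γ : ℝ) (hs2 : 0 < s2) (hγ : 0 < γ) :
    (∀ c μ1 μ2 : ℝ, recMeanSub γ s2 c μ1 μ2 = μ2 + γ * μ1) ∧
    (∀ c : ℝ, recMeanTrue γ s2 c μ1b μ2b = μ2b + γ * truncMean μ1b s2 c) ∧
    (∀ c μ1 μ2 : ℝ,
      firstMean s2 μ1 = firstMean s2 μ1b ∧
        recMeanSub γ s2 c μ1 μ2 = recMeanTrue γ s2 c μ1b μ2b →
      μ1 = μ1b ∧ μ2 = μ2b - γ * (μ1b - truncMean μ1b s2 c)) :=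
  recentered_moment_matching_general μ1b μ2b s2 γ hs2
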